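/- There exists N such that for every integer n ≥ N, the polynomial h_n(x) = x³ + n·x² + n has exactly one real root r and a pair of complex conjugate non-real roots τ, τ̄, and these satisfy: −n − 1/n < r < −n, the modulus |τ| < 1, and 0 < Re(τ) < 1/(2n); consequently the Mahler measure of h_n equals |r| and satisfies n < M(h_n) < n + 1/n, and M(h_n)⁴ < (1/4)·n²·(4n² + 27). -/

import Mathlib

open Polynomial

/-- The Mahler measure of a complex polynomial `f = c ∏ (X - αᵢ)`:
`M(f) = |c| ∏_{|αᵢ| ≥ 1} |αᵢ|`. -/
noncomputable def mahlerMeasure (f : Polynomial ℂ) : ℝ :=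
  ‖f.leadingCoeff‖ * ((f.roots).map (fun z => max 1 ‖z‖)).prod

open Complex Set ComplexConjugate

/-!
For large `n` the real root `r` of `hₙ` lies just below `-n`: `hₙ(-n) = n > 0` while
`hₙ(-n - 1/n) = -(2/n + 1/n³) < 0`. Dividing out `X - r` leaves the real quadratic
`X² + bX + c` with `b = n + r ∈ (-1/n, 0)` and `c = -n/r ∈ (1/2, 1)`, so its roots are a conjugate
pair `τ, τ̄` of modulus `√c < 1` and real part `-b/2 ∈ (0, 1/(2n))`. Hence only `r` contributes to
the Mahler measure, which is `|r| ∈ (n, n + 1/n)`.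
-/

theorem mahlerMeasure_eq_polynomial_mahlerMeasure (f : ℂ[X]) :
    _root_.mahlerMeasure f = f.mahlerMeasure :=
  (Polynomial.mahlerMeasure_eq_leadingCoeff_mul_prod_roots f).symm

theorem mahlerMeasure_of_eval_eq_cubic {f : ℂ[X]} {a b c : ℂ}
    (hf : ∀ z, f.eval z = (z - a) * (z - b) * (z - c)) :
    _root_.mahlerMeasure f = max 1 ‖a‖ * max 1 ‖b‖ * max 1 ‖c‖ := by
  have hprod : f = (X - C a) * (X - C b) * (X - C c) := Polynomial.funext fun z => by simp [hf]
  rw [mahlerMeasure_eq_polynomial_mahlerMeasure, hprod, Polynomial.mahlerMeasure_mul,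
    Polynomial.mahlerMeasure_mul, mahlerMeasure_X_sub_C, mahlerMeasure_X_sub_C,
    mahlerMeasure_X_sub_C]

theorem exists_conj_roots_of_sq_lt {p q : ℝ} (h : p ^ 2 < 4 * q) :
    ∃ τ : ℂ, 0 < τ.im ∧ τ.re = -p / 2 ∧ normSq τ = q ∧
      ∀ z : ℂ, z ^ 2 + p * z + q = (z - τ) * (z - conj τ) := by
  have hdisc : 0 < q - p ^ 2 / 4 := by linarith
  set τ : ℂ := ⟨-p / 2, √(q - p ^ 2 / 4)⟩
  have hnormSq : normSq τ = q := by
    rw [normSq_mk, Real.mul_self_sqrt hdisc.le]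
    ring
  have hsum : τ + conj τ = -p := by
    apply Complex.ext <;> simp [τ]
  have hmul : τ * conj τ = q := by rw [mul_conj, hnormSq]
  exact ⟨τ, Real.sqrt_pos.mpr hdisc, rfl, hnormSq, fun z => by linear_combination z * hsum - hmul⟩

theorem cubic_eq_mul_quadratic {R : Type*} [CommRing R] {n r : R} (hr : r ^ 3 + n * r ^ 2 + n = 0)
    (z : R) : z ^ 3 + n * z ^ 2 + n = (z - r) * (z ^ 2 + (n + r) * z + r * (n + r)) := by
  linear_combination hr

theorem exists_root_mem_Ioo {n : ℝ} (hn : 0 < n) :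
    ∃ r ∈ Ioo (-n - 1 / n) (-n), r ^ 3 + n * r ^ 2 + n = 0 := by
  have hleft : (-n - 1 / n) ^ 3 + n * (-n - 1 / n) ^ 2 + n = -(2 / n + 1 / n ^ 3) := by
    field_simp
    ring
  have hsign : (0 : ℝ) ∈ Ioo ((-n - 1 / n) ^ 3 + n * (-n - 1 / n) ^ 2 + n)
      ((-n) ^ 3 + n * (-n) ^ 2 + n) := by
    rw [hleft]
    constructor
    · have : 0 < 2 / n + 1 / n ^ 3 := by positivity
      linarith
    · ring_nf
      exact hn
  have hle : -n - 1 / n ≤ -n := by linarith [one_div_pos.mpr hn]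
  exact intermediate_value_Ioo hle (by fun_prop) hsign

theorem quadratic_cofactor_bounds {n r : ℝ} (hn : 2 ≤ n) (hr₁ : -n - 1 / n < r) (hr₂ : r < -n)
    (hroot : r ^ 3 + n * r ^ 2 + n = 0) :
    -(1 / n) < n + r ∧ n + r < 0 ∧ 1 / 2 < r * (n + r) ∧ r * (n + r) < 1 := by
  have hinv : 1 / n ≤ 1 / 2 := one_div_le_one_div_of_le two_pos hn
  have hc : r * (r * (n + r)) = -n := by linear_combination hroot
  exact ⟨by linarith, by linarith, by nlinarith, by nlinarith⟩

theorem add_one_div_pow_four_lt {n : ℝ} (hn : 2 ≤ n) :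
    (n + 1 / n) ^ 4 < 1 / 4 * n ^ 2 * (4 * n ^ 2 + 27) := by
  have hpos : 0 < n := by linarith
  have hsq : 4 ≤ n ^ 2 := by nlinarith
  rw [show n + 1 / n = (n ^ 2 + 1) / n by field_simp, div_pow, div_lt_iff₀ (by positivity)]
  nlinarith [mul_le_mul hsq hsq (by norm_num) (by positivity), pow_pos hpos 2]

/-- There exists `N` such that for every integer `n ≥ N`, `hₙ(x) = x³ + n·x² + n` has
exactly one real root `r` and a conjugate pair of non-real roots `τ, τ̄`, with
`−n − 1/n < r < −n`, `|τ| < 1`, `0 < Re τ < 1/(2n)`; consequently `M(hₙ) = |r|`,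
`n < M(hₙ) < n + 1/n`, and `M(hₙ)⁴ < (1/4)·n²·(4n² + 27)`. -/
theorem stmt9 : ∃ N : ℤ, ∀ n : ℤ, N ≤ n →
    ∃ (r : ℝ) (τ : ℂ), τ.im ≠ 0 ∧
      (∀ z : ℂ, z ^ 3 + (n : ℂ) * z ^ 2 + (n : ℂ) =
        (z - (r : ℂ)) * (z - τ) * (z - (starRingEnd ℂ) τ)) ∧
      -(n : ℝ) - 1 / (n : ℝ) < r ∧ r < -(n : ℝ) ∧
      ‖τ‖ < 1 ∧
      0 < τ.re ∧ τ.re < 1 / (2 * (n : ℝ)) ∧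
      _root_.mahlerMeasure (X ^ 3 + C (n : ℂ) * X ^ 2 + C (n : ℂ)) = |r| ∧
      (n : ℝ) < _root_.mahlerMeasure (X ^ 3 + C (n : ℂ) * X ^ 2 + C (n : ℂ)) ∧
      _root_.mahlerMeasure (X ^ 3 + C (n : ℂ) * X ^ 2 + C (n : ℂ)) < (n : ℝ) + 1 / (n : ℝ) ∧
      _root_.mahlerMeasure (X ^ 3 + C (n : ℂ) * X ^ 2 + C (n : ℂ)) ^ 4 <
        (1/4 : ℝ) * (n : ℝ) ^ 2 * (4 * (n : ℝ) ^ 2 + 27) := by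
  refine ⟨2, fun n hn => ?_⟩
  have hn : (2 : ℝ) ≤ n := by exact_mod_cast hn
  obtain ⟨r, ⟨hr₁, hr₂⟩, hroot⟩ := exists_root_mem_Ioo (n := (n : ℝ)) (by linarith)
  have habs : |r| = -r := abs_of_neg (by linarith)
  obtain ⟨hb₁, hb₂, hc₁, hc₂⟩ := quadratic_cofactor_bounds hn hr₁ hr₂ hroot
  obtain ⟨τ, him, hre, hnormSq, hquad⟩ :=
    exists_conj_roots_of_sq_lt (p := n + r) (q := r * (n + r)) (by nlinarith)
  have hfactor (z : ℂ) : z ^ 3 + (n : ℂ) * z ^ 2 + n = (z - r) * (z - τ) * (z - conj τ) := by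
    have hroot' : (r : ℂ) ^ 3 + n * (r : ℂ) ^ 2 + n = 0 := by exact_mod_cast congrArg ofReal hroot
    rw [cubic_eq_mul_quadratic hroot', mul_assoc, ← hquad]
    push_cast
    ring
  have hτ : ‖τ‖ < 1 := by
    rw [← sq_lt_one_iff₀ (norm_nonneg τ), Complex.sq_norm, hnormSq]
    exact hc₂
  have hM : _root_.mahlerMeasure (X ^ 3 + C (n : ℂ) * X ^ 2 + C (n : ℂ)) = |r| := by
    rw [mahlerMeasure_of_eval_eq_cubic (by simpa using hfactor), norm_real, Real.norm_eq_abs,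
      RCLike.norm_conj, max_eq_right (by linarith), max_eq_left hτ.le, mul_one, mul_one]
  refine ⟨r, τ, him.ne', hfactor, hr₁, hr₂, hτ, by linarith, ?_, hM, ?_, ?_, ?_⟩
  · rw [hre, mul_comm, ← div_div]
    linarith
  all_goals rw [hM, habs]
  · linarith
  · linarith
  · calc (-r) ^ 4 < (n + 1 / n) ^ 4 := by gcongr <;> linarith
      _ < _ := add_one_div_pow_four_lt hn
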